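/- Let the data matrices X_0, X, U be generated by the system, fix λ ∈ ℝ, and let α, β be vectors of appropriate dimensions. Then [X K_U − W Λ_λ X_0 K_U, X K_0][α; β] = 0 (i.e., X K_U α + X K_0 β = W Λ_λ X_0 K_U α) if and only if the trajectory of the system with initial state x(0) = X_0 K_U α and input sequence u(0),…,u(T−1) given by vec(u(0),…,u(T−1)) = U K_0 β satisfies x(t) = λ^t x(0) for all t = 1,…,T. -/

import Mathlib

/-!
By superposition, for every weight vector `c` the column `X c` is the state trajectory started
at `X₀ c` under the input `U c`. Taking `c = K_U α + K₀ β`, the initial state is `X₀ K_U α`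
because `X₀ K₀ = 0`, and the input is `U K₀ β` because `U K_U = 0`. Since `W Λ_λ v` stacks
`λ v, λ² v, …, λ^T v`, the matrix equation compares this trajectory with `λ^t x(0)` block by block.
-/

open Matrix

/-- The full state sequence over times `0, 1, …, T` built from the initial state `x0` and the
subsequent states `x 0 = x(1), …, x (T-1) = x(T)`. -/
def stateSeq {n T : ℕ} (x0 : Fin n → ℝ) (x : Fin T → Fin n → ℝ) : Fin (T + 1) → Fin n → ℝ :=
  Fin.cases x0 x

/-- `(x0, u, x)` is a trajectory of the system `x(t+1) = A x(t) + B u(t)`. -/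
def IsTrajectory {n m T : ℕ} (A : Matrix (Fin n) (Fin n) ℝ) (B : Matrix (Fin n) (Fin m) ℝ)
    (x0 : Fin n → ℝ) (u : Fin T → Fin m → ℝ) (x : Fin T → Fin n → ℝ) : Prop :=
  ∀ t : Fin T, x t = A.mulVec (stateSeq x0 x t.castSucc) + B.mulVec (u t)

/-- The data matrices are generated by `N` experiments of length `T` on the system. -/
def DataGenerated {n m T N : ℕ} (A : Matrix (Fin n) (Fin n) ℝ) (B : Matrix (Fin n) (Fin m) ℝ)
    (X0 : Matrix (Fin n) (Fin N) ℝ) (X : Matrix (Fin T × Fin n) (Fin N) ℝ)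
    (U : Matrix (Fin T × Fin m) (Fin N) ℝ) : Prop :=
  ∀ i : Fin N, IsTrajectory A B (fun j => X0 j i) (fun t j => U (t, j) i) (fun t j => X (t, j) i)

/-- The columns of `Kb` form a basis of `Ker M`. -/
def IsKerBasis {α β γ : Type*} [Fintype β] [Fintype γ]
    (M : Matrix α β ℝ) (Kb : Matrix β γ ℝ) : Prop :=
  Function.Injective Kb.mulVecLin ∧ LinearMap.range Kb.mulVecLin = LinearMap.ker M.mulVecLin

/-- `Λ_λ = [I; λI; λ²I; …; λ^T I] ∈ ℝ^{n(T+1) × n}`. -/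
def LamMat (T n : ℕ) (lam : ℝ) : Matrix (Fin (T + 1) × Fin n) (Fin n) ℝ :=
  Matrix.of fun p q => lam ^ (p.1 : ℕ) * (if p.2 = q then 1 else 0)

/-- `W = [0_{nT×n}  I_{nT}]`, the matrix extracting the last `nT` rows of `Λ_λ`. -/
def Wmat (T n : ℕ) : Matrix (Fin T × Fin n) (Fin (T + 1) × Fin n) ℝ :=
  Matrix.of fun p q => if q.1 = p.1.succ ∧ q.2 = p.2 then 1 else 0

/-- The state trajectory of `x(t+1) = A x(t) + B u(t)` from initial state `x0` with input `u`. -/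
def trajFrom {n m : ℕ} (A : Matrix (Fin n) (Fin n) ℝ) (B : Matrix (Fin n) (Fin m) ℝ)
    (x0 : Fin n → ℝ) (u : ℕ → Fin m → ℝ) : ℕ → Fin n → ℝ
  | 0 => x0
  | t + 1 => A.mulVec (trajFrom A B x0 u t) + B.mulVec (u t)

lemma stateSeq_sum {n T : ℕ} {ι : Type*} (s : Finset ι) (c : ι → ℝ) (x0 : ι → Fin n → ℝ)
    (x : ι → Fin T → Fin n → ℝ) :
    stateSeq (∑ i ∈ s, c i • x0 i) (∑ i ∈ s, c i • x i) = ∑ i ∈ s, c i • stateSeq (x0 i) (x i) := by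
  funext r
  cases r using Fin.cases <;> simp [stateSeq, Finset.sum_apply]

lemma IsTrajectory.sum {n m T : ℕ} {ι : Type*} {A : Matrix (Fin n) (Fin n) ℝ}
    {B : Matrix (Fin n) (Fin m) ℝ} {s : Finset ι} {x0 : ι → Fin n → ℝ} {u : ι → Fin T → Fin m → ℝ}
    {x : ι → Fin T → Fin n → ℝ} (h : ∀ i ∈ s, IsTrajectory A B (x0 i) (u i) (x i)) (c : ι → ℝ) :
    IsTrajectory A B (∑ i ∈ s, c i • x0 i) (∑ i ∈ s, c i • u i) (∑ i ∈ s, c i • x i) := by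
  intro t
  rw [stateSeq_sum]
  simp only [Finset.sum_apply, Pi.smul_apply, mulVec_sum, mulVec_smul, ← Finset.sum_add_distrib,
    ← smul_add]
  exact Finset.sum_congr rfl fun i hi => by rw [h i hi t]

lemma DataGenerated.isTrajectory_mulVec {n m T N : ℕ} {A : Matrix (Fin n) (Fin n) ℝ}
    {B : Matrix (Fin n) (Fin m) ℝ} {X0 : Matrix (Fin n) (Fin N) ℝ}
    {X : Matrix (Fin T × Fin n) (Fin N) ℝ} {U : Matrix (Fin T × Fin m) (Fin N) ℝ}
    (hdata : DataGenerated A B X0 X U) (c : Fin N → ℝ) :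
    IsTrajectory A B (X0 *ᵥ c) (fun t j => (U *ᵥ c) (t, j)) (fun t j => (X *ᵥ c) (t, j)) := by
  have key := IsTrajectory.sum (s := Finset.univ) (fun i _ => hdata i) c
  convert key using 2 <;> ext <;> simp [mulVec, dotProduct, Finset.sum_apply, mul_comm]

lemma IsTrajectory.eq_trajFrom {n m T : ℕ} {A : Matrix (Fin n) (Fin n) ℝ}
    {B : Matrix (Fin n) (Fin m) ℝ} {x0 : Fin n → ℝ} {u : Fin T → Fin m → ℝ}
    {x : Fin T → Fin n → ℝ} (h : IsTrajectory A B x0 u x) (t : Fin T) :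
    x t = trajFrom A B x0 (fun s j => if hs : s < T then u ⟨s, hs⟩ j else 0) (t + 1) := by
  obtain ⟨k, hk⟩ := t
  induction k with
  | zero => simp [h ⟨0, hk⟩, trajFrom, stateSeq, hk]
  | succ k ih =>
    have hcast : (⟨k + 1, hk⟩ : Fin T).castSucc = (⟨k, by omega⟩ : Fin T).succ := rfl
    rw [h ⟨k + 1, hk⟩, hcast, stateSeq, Fin.cases_succ, ih (by omega)]
    simp [trajFrom, hk]

lemma Wmat_mul_LamMat_mulVec {T n : ℕ} (lam : ℝ) (v : Fin n → ℝ) (t : Fin T) (j : Fin n) :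
    ((Wmat T n * LamMat T n lam) *ᵥ v) (t, j) = lam ^ ((t : ℕ) + 1) * v j := by
  simp [mulVec, dotProduct, mul_apply, Wmat, LamMat, Fintype.sum_prod_type, ite_and]

lemma IsKerBasis.mulVec_mulVec_eq_zero {α β γ : Type*} [Fintype β] [Fintype γ]
    {M : Matrix α β ℝ} {K : Matrix β γ ℝ} (h : IsKerBasis M K) (v : γ → ℝ) :
    M *ᵥ (K *ᵥ v) = 0 :=
  LinearMap.mem_ker.mp (h.2 ▸ LinearMap.mem_range_self K.mulVecLin v)

/-- `X K_U α + X K_0 β = W Λ_λ X₀ K_U α` holds if and only if the trajectory of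
the system with initial state `x(0) = X₀ K_U α` and input sequence `vec(u(0),…,u(T-1)) = U K₀ β`
satisfies `x(t) = λ^t x(0)` for all `t = 1, …, T`. -/
theorem stmt4 {n m T N p q : ℕ}
    (A : Matrix (Fin n) (Fin n) ℝ) (B : Matrix (Fin n) (Fin m) ℝ)
    (X0 : Matrix (Fin n) (Fin N) ℝ) (X : Matrix (Fin T × Fin n) (Fin N) ℝ)
    (U : Matrix (Fin T × Fin m) (Fin N) ℝ)
    (hdata : DataGenerated A B X0 X U)
    (KU : Matrix (Fin N) (Fin p) ℝ) (K0 : Matrix (Fin N) (Fin q) ℝ)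
    (hKU : IsKerBasis U KU) (hK0 : IsKerBasis X0 K0)
    (lam : ℝ) (α : Fin p → ℝ) (β : Fin q → ℝ) :
    X.mulVec (KU.mulVec α) + X.mulVec (K0.mulVec β) =
        (Wmat T n * LamMat T n lam).mulVec (X0.mulVec (KU.mulVec α)) ↔
      (∀ t : Fin T, ∀ j : Fin n,
        trajFrom A B (X0.mulVec (KU.mulVec α))
            (fun t j => if h : t < T then U.mulVec (K0.mulVec β) (⟨t, h⟩, j) else 0)
            ((t : ℕ) + 1) j =
          lam ^ ((t : ℕ) + 1) * X0.mulVec (KU.mulVec α) j) := by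
  set a := KU *ᵥ α
  set b := K0 *ᵥ β
  have hinit : X0 *ᵥ (a + b) = X0 *ᵥ a := by
    rw [mulVec_add, hK0.mulVec_mulVec_eq_zero, add_zero]
  have hinput : U *ᵥ (a + b) = U *ᵥ b := by
    rw [mulVec_add, hKU.mulVec_mulVec_eq_zero, zero_add]
  have htraj := (hdata.isTrajectory_mulVec (a + b)).eq_trajFrom
  simp only [hinit, hinput] at htraj
  rw [← mulVec_add, funext_iff, Prod.forall]
  refine forall_congr' fun t => forall_congr' fun j => ?_
  rw [Wmat_mul_LamMat_mulVec, ← htraj t]
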